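/- arXiv:2110.14225 — 2 statements merged into one kernel-verified Lean document; each statement's English description precedes it below -/
import Mathlib

section
/- Let V be a real vector space, let s be a symmetric positive semidefinite bilinear form on V, let ⦀·⦀₀ be a seminorm on V, let α ≥ 0, and define the augmented energy norm ⦀v⦀_α := (⦀v⦀₀² + α·s(v, v))^{1/2}. Let B be a bilinear form on V, let V_h be a subspace of V, and let C_c ≥ 0 and C_b ≥ 0 be constants such that: (coercivity) ⦀v⦀_α² ≤ C_c·B(v, v) for all v ∈ V_h; (continuity) |B(v, w)| ≤ C_b·⦀v⦀_α·⦀w⦀_α for all v, w ∈ V; and let u ∈ V and u_h ∈ V_h satisfy the perturbed Galerkin orthogonality B(u − u_h, v) = α·s(u, v) for all v ∈ V_h. Then for every w_h ∈ V_h, ⦀u − u_h⦀_α ≤ (1 + C_c·C_b)·⦀u − w_h⦀_α + C_c·α^{1/2}·s(u, u)^{1/2}. -/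
/-!
The energy norm is the ℓ²-combination of `p` and the seminorm `v ↦ √(α s(v, v))`, so it is a
seminorm. For `e = w_h - u_h ∈ V_h`, coercivity and the perturbed Galerkin orthogonality give
`⦀e⦀² ≤ C_c (B(w_h - u, e) + α s(u, e))`, and continuity of `B` together with Cauchy–Schwarz for
`α s` bound the right-hand side by `C_c (C_b ⦀u - w_h⦀ + α^{1/2} s(u, u)^{1/2}) ⦀e⦀`. The triangle
inequality `⦀u - u_h⦀ ≤ ⦀u - w_h⦀ + ⦀e⦀` then concludes, exactly as in Strang's second lemma,
with the consistency error `α s(u, ·)` in place of the usual one.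
-/

open Real

theorem Real.sqrt_add_sq_add_add_sq_le (a b c d : ℝ) :
    √((a + c) ^ 2 + (b + d) ^ 2) ≤ √(a ^ 2 + b ^ 2) + √(c ^ 2 + d ^ 2) := by
  simpa [WithLp.prod_norm_eq_of_L2] using
    norm_add_le (WithLp.toLp 2 (a, b)) (WithLp.toLp 2 (c, d))

namespace LinearMap.BilinForm.IsPosSemidef

variable {V : Type*} [AddCommGroup V] [Module ℝ V] {s : LinearMap.BilinForm ℝ V}
  (hs : s.IsPosSemidef)
include hs

theorem apply_le_sqrt_mul_sqrt (x y : V) : s x y ≤ √(s x x) * √(s y y) := by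
  rw [← sqrt_mul (hs.isNonneg.nonneg x)]
  exact le_sqrt_of_sq_le (s.apply_sq_le_of_symm hs.isNonneg.nonneg (isSymm_iff.1 hs.isSymm) x y)

noncomputable def toSeminorm : Seminorm ℝ V :=
  Seminorm.of (fun v => √(s v v))
    (fun x y => by
      have hexpand : s (x + y) (x + y) = s x x + 2 * s x y + s y y := by
        simp only [map_add, LinearMap.add_apply, hs.isSymm.eq y x]; ring
      rw [sqrt_le_left (by positivity), hexpand, add_sq, sq_sqrt (hs.isNonneg.nonneg x),
        sq_sqrt (hs.isNonneg.nonneg y)]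
      linarith [hs.apply_le_sqrt_mul_sqrt x y])
    (fun c x => by
      simp only [map_smul, smul_apply, smul_eq_mul, ← mul_assoc, norm_eq_abs]
      rw [sqrt_mul (mul_self_nonneg c), sqrt_mul_self_eq_abs])

theorem toSeminorm_apply (v : V) : hs.toSeminorm v = √(s v v) := rfl

end LinearMap.BilinForm.IsPosSemidef

namespace Seminorm

variable {V : Type*} [AddCommGroup V] [Module ℝ V]

noncomputable def l2Sum (p q : Seminorm ℝ V) : Seminorm ℝ V :=
  Seminorm.of (fun v => √(p v ^ 2 + q v ^ 2))
    (fun x y => by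
      refine (sqrt_le_sqrt ?_).trans (sqrt_add_sq_add_add_sq_le (p x) (q x) (p y) (q y))
      gcongr <;> apply map_add_le_add)
    (fun c x => by
      simp only [map_smul_eq_mul, mul_pow, ← mul_add, norm_eq_abs]
      rw [sqrt_mul (sq_nonneg _), sqrt_sq (abs_nonneg c)])

theorem l2Sum_apply (p q : Seminorm ℝ V) (v : V) : p.l2Sum q v = √(p v ^ 2 + q v ^ 2) := rfl

theorem le_l2Sum_right (p q : Seminorm ℝ V) (v : V) : q v ≤ p.l2Sum q v :=
  le_sqrt_of_sq_le (le_add_of_nonneg_left (sq_nonneg _))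

end Seminorm

section StrangLemma

variable {V : Type*} [AddCommGroup V] [Module ℝ V] (N : Seminorm ℝ V)
  (B : LinearMap.BilinForm ℝ V) {Vh : Submodule ℝ V} {Cc Cb η : ℝ} {u uh wh : V}

theorem discrete_error_le_of_coercive (hCc : 0 ≤ Cc) (hCb : 0 ≤ Cb) (hη : 0 ≤ η)
    (hcoer : ∀ v ∈ Vh, N v ^ 2 ≤ Cc * B v v) (hcont : ∀ v w, |B v w| ≤ Cb * N v * N w)
    (huh : uh ∈ Vh) (hcons : ∀ v ∈ Vh, B (u - uh) v ≤ η * N v) (hwh : wh ∈ Vh) :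
    N (wh - uh) ≤ Cc * Cb * N (u - wh) + Cc * η := by
  set e := wh - uh
  have he : e ∈ Vh := Vh.sub_mem hwh huh
  have hsplit : B e e = B (wh - u) e + B (u - uh) e := by
    rw [← LinearMap.add_apply, ← map_add, sub_add_sub_cancel]
  have hcont_e : B (wh - u) e ≤ Cb * N (u - wh) * N e := by
    rw [← map_sub_rev N]; exact (le_abs_self _).trans (hcont _ _)
  have hsq : N e ^ 2 ≤ (Cc * Cb * N (u - wh) + Cc * η) * N e :=
    calc N e ^ 2 ≤ Cc * B e e := hcoer e he
      _ ≤ Cc * (Cb * N (u - wh) * N e + η * N e) := by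
        rw [hsplit]; gcongr; exact hcons e he
      _ = (Cc * Cb * N (u - wh) + Cc * η) * N e := by ring
  have hbound : 0 ≤ Cc * Cb * N (u - wh) + Cc * η := by positivity
  nlinarith [apply_nonneg N e]

theorem strang_second_lemma (hCc : 0 ≤ Cc) (hCb : 0 ≤ Cb) (hη : 0 ≤ η)
    (hcoer : ∀ v ∈ Vh, N v ^ 2 ≤ Cc * B v v) (hcont : ∀ v w, |B v w| ≤ Cb * N v * N w)
    (huh : uh ∈ Vh) (hcons : ∀ v ∈ Vh, B (u - uh) v ≤ η * N v) (hwh : wh ∈ Vh) :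
    N (u - uh) ≤ (1 + Cc * Cb) * N (u - wh) + Cc * η :=
  calc N (u - uh) ≤ N (u - wh) + N (wh - uh) := le_map_sub_add_map_sub N u wh uh
    _ ≤ N (u - wh) + (Cc * Cb * N (u - wh) + Cc * η) := by
      gcongr; exact discrete_error_le_of_coercive N B hCc hCb hη hcoer hcont huh hcons hwh
    _ = (1 + Cc * Cb) * N (u - wh) + Cc * η := by ring

end StrangLemma

/-- **Abstract energy norm a priori error estimate** for the finite cell
method with least-squares stabilized Nitsche boundary conditions:
coercivity and continuity of the stabilized form `B` with respect to the
augmented energy norm, together with the perturbed Galerkin orthogonality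
caused by the inconsistent finite cell stabilization `s`, yield a
Strang-type bound against any discrete interpolant `wh`. -/
theorem energy_norm_error_estimate
    {V : Type*} [AddCommGroup V] [Module ℝ V]
    (s : V →ₗ[ℝ] V →ₗ[ℝ] ℝ)
    (hsymm : ∀ v w : V, s v w = s w v)
    (hpsd : ∀ v : V, 0 ≤ s v v)
    (p : Seminorm ℝ V)
    (α : ℝ) (hα : 0 ≤ α)
    (E : V → ℝ) (hE : ∀ v : V, E v = Real.sqrt ((p v) ^ 2 + α * s v v))
    (B : V →ₗ[ℝ] V →ₗ[ℝ] ℝ)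
    (Vh : Submodule ℝ V)
    (Cc Cb : ℝ) (hCc : 0 ≤ Cc) (hCb : 0 ≤ Cb)
    (hcoer : ∀ v ∈ Vh, (E v) ^ 2 ≤ Cc * B v v)
    (hcont : ∀ v w : V, |B v w| ≤ Cb * E v * E w)
    (u : V) (uh : V) (huh : uh ∈ Vh)
    (hgalerkin : ∀ v ∈ Vh, B (u - uh) v = α * s u v) :
    ∀ wh ∈ Vh, E (u - uh) ≤
      (1 + Cc * Cb) * E (u - wh) + Cc * Real.sqrt α * Real.sqrt (s u u) := by
  intro wh hwh
  have hs : LinearMap.BilinForm.IsPosSemidef s := ⟨⟨hsymm⟩, ⟨hpsd⟩⟩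
  have hαs := hs.smul hα
  set q := hαs.toSeminorm
  have hEq : E = p.l2Sum q := funext fun v => by
    rw [hE, Seminorm.l2Sum_apply, hαs.toSeminorm_apply, sq_sqrt (hαs.isNonneg.nonneg v)]; rfl
  have hqu : √α * √(s u u) = q u := (sqrt_mul hα _).symm
  rw [mul_assoc Cc, hqu]
  subst hEq
  refine strang_second_lemma _ B hCc hCb (apply_nonneg q u) hcoer hcont huh (fun v hv => ?_) hwh
  calc B (u - uh) v = (α • s) u v := hgalerkin v hv
    _ ≤ q u * q v := hαs.apply_le_sqrt_mul_sqrt u v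
    _ ≤ q u * p.l2Sum q v := by gcongr; exact p.le_l2Sum_right q v
end

section
/- Let V be a real vector space equipped with a nonnegative function ⦀·⦀ : V → ℝ, let H be a real inner product space, let ι : V → H be a linear map, let B be a bilinear form on V with |B(v, w)| ≤ C_b·⦀v⦀·⦀w⦀ for all v, w ∈ V, let V_h be a subspace of V, let e ∈ V, and let ρ : V → ℝ satisfy B(e, v) = ρ(v) for all v ∈ V_h. Suppose there exist φ ∈ V, πφ ∈ V_h, a real number R, and constants C_r, C_d, C_ρ ≥ 0 such that ⟨ι e, ι e⟩ = B(e, φ) + R with |R| ≤ C_r·⦀e⦀·‖ι e‖, ⦀φ − πφ⦀ ≤ C_d·‖ι e‖, and |ρ(πφ)| ≤ C_ρ·‖ι e‖. Then ‖ι e‖ ≤ (C_b·C_d + C_r)·⦀e⦀ + C_ρ. -/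
/-! Write `‖ι e‖² = B(e, φ) + R`. Since `B(e, πφ) = ρ(πφ)` for the discrete `πφ`, Galerkin
orthogonality up to the residual turns `B(e, φ)` into `B(e, φ - πφ) + ρ(πφ)`, and continuity of
`B` with the interpolation estimate bounds it by `C_b C_d ⦀e⦀ ‖ι e‖ + C_ρ ‖ι e‖`. Together with
the bound on `R` this gives `‖ι e‖² ≤ ((C_b C_d + C_r) ⦀e⦀ + C_ρ) ‖ι e‖`; divide by `‖ι e‖`. -/

theorem mul_nonneg_of_abs_le_mul_mul_self {a c t : ℝ} (h : |a| ≤ c * t * t) (ht : 0 ≤ t) :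
    0 ≤ c * t := by
  rcases ht.eq_or_lt with rfl | ht
  · simp
  · exact nonneg_of_mul_nonneg_left ((abs_nonneg a).trans h) ht

theorem le_of_sq_le_mul_self {x c : ℝ} (hx : 0 ≤ x) (hc : 0 ≤ c) (h : x ^ 2 ≤ c * x) :
    x ≤ c := by
  rcases hx.eq_or_lt with rfl | hx
  · exact hc
  · exact le_of_mul_le_mul_right (by rwa [← sq]) hx

theorem LinearMap.apply_eq_apply_sub_add_of_mem {V : Type*} [AddCommGroup V] [Module ℝ V]
    (B : V →ₗ[ℝ] V →ₗ[ℝ] ℝ) {Vh : Submodule ℝ V} {e : V} {ρ : V → ℝ}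
    (hres : ∀ v ∈ Vh, B e v = ρ v) (φ : V) {πφ : V} (hπφ : πφ ∈ Vh) :
    B e φ = B e (φ - πφ) + ρ πφ := by
  rw [map_sub, hres πφ hπφ, sub_add_cancel]

/-- **Abstract duality (Aubin–Nitsche) argument** underlying the L² error
estimate: the error `e` measured in the inner product space `H` (via the
linear map `ι`) is bounded using the dual solution `φ`, its interpolant `πφ`,
the extra least-squares remainder `R`, and the Galerkin residual `ρ` coming
from the inconsistent finite cell stabilization. -/
theorem abstract_duality_argument
    {V : Type*} [AddCommGroup V] [Module ℝ V]
    {H : Type*} [NormedAddCommGroup H] [InnerProductSpace ℝ H]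
    (nn : V → ℝ) (hnn : ∀ v : V, 0 ≤ nn v)
    (ι : V →ₗ[ℝ] H)
    (B : V →ₗ[ℝ] V →ₗ[ℝ] ℝ)
    (Cb : ℝ) (hcont : ∀ v w : V, |B v w| ≤ Cb * nn v * nn w)
    (Vh : Submodule ℝ V)
    (e : V) (ρ : V → ℝ)
    (hres : ∀ v ∈ Vh, B e v = ρ v)
    (φ : V) (πφ : V) (hπφ : πφ ∈ Vh)
    (R : ℝ) (Cr Cd Cρ : ℝ)
    (hCr : 0 ≤ Cr) (hCd : 0 ≤ Cd) (hCρ : 0 ≤ Cρ)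
    (hdual : (inner ℝ (ι e) (ι e) : ℝ) = B e φ + R)
    (hR : |R| ≤ Cr * nn e * ‖ι e‖)
    (hinterp : nn (φ - πφ) ≤ Cd * ‖ι e‖)
    (hρ : |ρ πφ| ≤ Cρ * ‖ι e‖) :
    ‖ι e‖ ≤ (Cb * Cd + Cr) * nn e + Cρ := by
  have hCb : 0 ≤ Cb * nn e := mul_nonneg_of_abs_le_mul_mul_self (hcont e e) (hnn e)
  have hsq : ‖ι e‖ ^ 2 ≤ ((Cb * Cd + Cr) * nn e + Cρ) * ‖ι e‖ := calc
    ‖ι e‖ ^ 2 = B e (φ - πφ) + ρ πφ + R := by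
      rw [← real_inner_self_eq_norm_sq, hdual, B.apply_eq_apply_sub_add_of_mem hres φ hπφ]
    _ ≤ Cb * nn e * nn (φ - πφ) + Cρ * ‖ι e‖ + Cr * nn e * ‖ι e‖ := by
      gcongr
      · exact (le_abs_self _).trans (hcont e _)
      · exact (le_abs_self _).trans hρ
      · exact (le_abs_self _).trans hR
    _ ≤ Cb * nn e * (Cd * ‖ι e‖) + Cρ * ‖ι e‖ + Cr * nn e * ‖ι e‖ := by gcongr
    _ = ((Cb * Cd + Cr) * nn e + Cρ) * ‖ι e‖ := by ring
  have hbound : 0 ≤ (Cb * Cd + Cr) * nn e + Cρ := by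
    nlinarith [mul_nonneg hCb hCd, mul_nonneg hCr (hnn e)]
  exact le_of_sq_le_mul_self (norm_nonneg _) hbound hsq
end
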